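/- Let Λ > 0 and Δ > 0 and let β be a random variable symmetric about 0 supported in [−B, B]. Define A(β) = (Λ − exp(βΔ))/(Λ + exp(βΔ)). Then E[A(β)·β] = −E[ 1_{β>0} · β · 2Λ(exp(βΔ) − exp(−βΔ)) / (Λ² + Λ(exp(βΔ) + exp(−βΔ)) + 1) ] ≤ 0. -/

import Mathlib

open MeasureTheory

theorem stmt_10 {Ω : Type*} [MeasurableSpace Ω] (μ : Measure Ω) [IsProbabilityMeasure μ]
    (β : Ω → ℝ) (hβ : Measurable β) (B : ℝ) (hbd : ∀ᵐ ω ∂μ, |β ω| ≤ B)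
    (hsym : Measure.map β μ = Measure.map (fun ω => -β ω) μ)
    (Λ Δ : ℝ) (hΛ : 0 < Λ) (hΔ : 0 < Δ) :
    (∫ ω, (Λ - Real.exp (β ω * Δ)) / (Λ + Real.exp (β ω * Δ)) * β ω ∂μ =
      -∫ ω, (if 0 < β ω then
          β ω * (2 * Λ * (Real.exp (β ω * Δ) - Real.exp (-β ω * Δ))) /
            (Λ ^ 2 + Λ * (Real.exp (β ω * Δ) + Real.exp (-β ω * Δ)) + 1)
        else 0) ∂μ) ∧
    ∫ ω, (Λ - Real.exp (β ω * Δ)) / (Λ + Real.exp (β ω * Δ)) * β ω ∂μ ≤ 0 := by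
  have hexp : ∀ x : ℝ, 0 < Λ + Real.exp (x * Δ) := fun x => by positivity
  have hD : ∀ x : ℝ, 0 < Λ ^ 2 + Λ * (Real.exp (x * Δ) + Real.exp (-x * Δ)) + 1 :=
    fun x => by positivity
  set f : ℝ → ℝ := fun x => (Λ - Real.exp (x * Δ)) / (Λ + Real.exp (x * Δ)) * x with hfdef
  set g : ℝ → ℝ := fun x => x * (2 * Λ * (Real.exp (x * Δ) - Real.exp (-x * Δ))) /
      (Λ ^ 2 + Λ * (Real.exp (x * Δ) + Real.exp (-x * Δ)) + 1) with hgdef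
  set h : ℝ → ℝ := fun x => if 0 < x then g x else 0 with hhdef
  -- basic nonnegativity of B
  have hB0 : 0 ≤ B := by
    obtain ⟨ω, hω⟩ := hbd.exists
    exact le_trans (abs_nonneg _) hω
  -- pointwise identity: f x + f (-x) = - g x
  have hfg : ∀ x : ℝ, f x + f (-x) = -g x := by
    intro x
    have hu := Real.exp_pos (x * Δ)
    have hvu : Real.exp (-x * Δ) = (Real.exp (x * Δ))⁻¹ := by
      rw [neg_mul, Real.exp_neg]
    simp only [hfdef, hgdef, hvu]
    have h1 : Λ + Real.exp (x * Δ) ≠ 0 := (hexp x).ne'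
    have h2 : Λ + (Real.exp (x * Δ))⁻¹ ≠ 0 := by positivity
    have h3 : Λ ^ 2 + Λ * (Real.exp (x * Δ) + (Real.exp (x * Δ))⁻¹) + 1 ≠ 0 := by positivity
    field_simp
    ring
  -- g is even
  have hgeven : ∀ x : ℝ, g (-x) = g x := by
    intro x
    simp only [hgdef, neg_neg]
    ring
  -- pointwise identity: h x + h (-x) = g x
  have hgh : ∀ x : ℝ, h x + h (-x) = g x := by
    intro x
    rcases lt_trichotomy 0 x with hx | hx | hx
    · simp only [hhdef, if_pos hx, if_neg (by linarith : ¬ 0 < -x), add_zero]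
    · subst hx
      simp [hhdef, hgdef]
    · simp only [hhdef, if_neg (by linarith : ¬ 0 < x), if_pos (by linarith : 0 < -x),
        zero_add, hgeven]
  -- h is nonnegative
  have hnn : ∀ x : ℝ, 0 ≤ h x := by
    intro x
    by_cases hx : 0 < x
    · simp only [hhdef, if_pos hx, hgdef]
      have hle : Real.exp (-x * Δ) ≤ Real.exp (x * Δ) :=
        Real.exp_le_exp.mpr (by nlinarith)
      exact div_nonneg (mul_nonneg hx.le (by nlinarith)) (hD x).le
    · simp only [hhdef, if_neg hx]; exact le_refl 0
  -- measurability
  have mg : Measurable g := by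
    apply Measurable.div
    · fun_prop
    · fun_prop
  have mf : Measurable f := by fun_prop
  have mh : Measurable h := Measurable.ite measurableSet_Ioi mg measurable_const
  -- bound on f
  have hfb : ∀ x : ℝ, |f x| ≤ |x| := by
    intro x
    have hu := Real.exp_pos (x * Δ)
    simp only [hfdef, abs_mul]
    have hq : |(Λ - Real.exp (x * Δ)) / (Λ + Real.exp (x * Δ))| ≤ 1 := by
      rw [abs_div, abs_of_pos (hexp x), div_le_one (hexp x), abs_le]
      constructor <;> nlinarith
    calc |(Λ - Real.exp (x * Δ)) / (Λ + Real.exp (x * Δ))| * |x| ≤ 1 * |x| :=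
          mul_le_mul_of_nonneg_right hq (abs_nonneg x)
      _ = |x| := one_mul _
  -- bound on g
  set C : ℝ := B * (4 * Λ * Real.exp (B * Δ)) / (Λ ^ 2 + 1) with hCdef
  have hgb : ∀ x : ℝ, |x| ≤ B → |g x| ≤ C := by
    intro x hxB
    have hx1 : x ≤ B := le_trans (le_abs_self x) hxB
    have hx2 : -x ≤ B := by
      have := (abs_le.mp hxB).1
      linarith
    have hu : Real.exp (x * Δ) ≤ Real.exp (B * Δ) :=
      Real.exp_le_exp.mpr (mul_le_mul_of_nonneg_right hx1 hΔ.le)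
    have hv : Real.exp (-x * Δ) ≤ Real.exp (B * Δ) :=
      Real.exp_le_exp.mpr (mul_le_mul_of_nonneg_right hx2 hΔ.le)
    have hN : |2 * Λ * (Real.exp (x * Δ) - Real.exp (-x * Δ))| ≤ 4 * Λ * Real.exp (B * Δ) := by
      rw [abs_le]
      constructor <;> nlinarith [Real.exp_pos (x * Δ), Real.exp_pos (-x * Δ)]
    have hden : Λ ^ 2 + 1 ≤ Λ ^ 2 + Λ * (Real.exp (x * Δ) + Real.exp (-x * Δ)) + 1 := by
      nlinarith [Real.exp_pos (x * Δ), Real.exp_pos (-x * Δ)]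
    calc |g x| = |x| * |2 * Λ * (Real.exp (x * Δ) - Real.exp (-x * Δ))| /
          (Λ ^ 2 + Λ * (Real.exp (x * Δ) + Real.exp (-x * Δ)) + 1) := by
          rw [hgdef]
          rw [abs_div, abs_mul, abs_of_pos (hD x)]
      _ ≤ B * (4 * Λ * Real.exp (B * Δ)) / (Λ ^ 2 + 1) := by
          apply div_le_div₀ (by positivity)
            (mul_le_mul hxB hN (abs_nonneg _) hB0) (by positivity) hden
      _ = C := rfl
  -- bound on h
  have hhb : ∀ x : ℝ, |x| ≤ B → |h x| ≤ C := by
    intro x hxB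
    by_cases hx : 0 < x
    · simpa only [hhdef, if_pos hx] using hgb x hxB
    · simp only [hhdef, if_neg hx, abs_zero]
      positivity
  -- integrability
  have hbd' : ∀ᵐ ω ∂μ, |(-β) ω| ≤ B := by
    filter_upwards [hbd] with ω hω
    simpa [abs_neg] using hω
  have intf : Integrable (fun ω => f (β ω)) μ := by
    apply Integrable.mono' (integrable_const B) (mf.comp hβ).aestronglyMeasurable
    filter_upwards [hbd] with ω hω
    exact le_trans (hfb (β ω)) hω
  have intf' : Integrable (fun ω => f (-β ω)) μ := by
    apply Integrable.mono' (integrable_const B) (mf.comp hβ.neg).aestronglyMeasurable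
    filter_upwards [hbd] with ω hω
    calc ‖f (-β ω)‖ ≤ |(-β ω)| := hfb _
      _ = |β ω| := abs_neg _
      _ ≤ B := hω
  have inth : Integrable (fun ω => h (β ω)) μ := by
    apply Integrable.mono' (integrable_const C) (mh.comp hβ).aestronglyMeasurable
    filter_upwards [hbd] with ω hω
    exact hhb (β ω) hω
  have inth' : Integrable (fun ω => h (-β ω)) μ := by
    apply Integrable.mono' (integrable_const C) (mh.comp hβ.neg).aestronglyMeasurable
    filter_upwards [hbd] with ω hω
    exact hhb (-β ω) (by rwa [abs_neg])
  -- symmetry: ∫ φ(β) = ∫ φ(-β) for measurable φ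
  have hsym' : ∀ φ : ℝ → ℝ, Measurable φ → ∫ ω, φ (β ω) ∂μ = ∫ ω, φ (-β ω) ∂μ := by
    intro φ hφ
    rw [← integral_map hβ.aemeasurable hφ.aestronglyMeasurable, hsym,
      integral_map (φ := fun ω => -β ω) (hβ.neg.aemeasurable) hφ.aestronglyMeasurable]
  have hIf : ∫ ω, f (β ω) ∂μ = ∫ ω, f (-β ω) ∂μ := hsym' f mf
  have hIh : ∫ ω, h (β ω) ∂μ = ∫ ω, h (-β ω) ∂μ := hsym' h mh
  -- sum identities
  have key1 : (∫ ω, f (β ω) ∂μ) + (∫ ω, f (-β ω) ∂μ) = -∫ ω, g (β ω) ∂μ := by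
    rw [← integral_add intf intf', ← integral_neg]
    congr 1
    funext ω
    exact hfg (β ω)
  have key2 : (∫ ω, h (β ω) ∂μ) + (∫ ω, h (-β ω) ∂μ) = ∫ ω, g (β ω) ∂μ := by
    rw [← integral_add inth inth']
    congr 1
    funext ω
    exact hgh (β ω)
  have hJ : ∫ ω, f (β ω) ∂μ = -∫ ω, h (β ω) ∂μ := by
    rw [← hIf] at key1
    rw [← hIh] at key2
    linarith
  have hJnn : 0 ≤ ∫ ω, h (β ω) ∂μ := integral_nonneg fun ω => hnn (β ω)
  constructor
  · exact hJ
  · rw [hJ]; linarith
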